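/- Assume the action theory ⟨S, E, X, I⟩ satisfies Postulate PS* (no implicit static laws for the whole theory). Then it satisfies Postulate PI* if and only if for every action a, the theory ⟨S, E_a, X_a, I_a⟩ satisfies Postulate PI. -/

import Mathlib

/-! Classical propositional formulas. -/
inductive PForm (α : Type) : Type
  | atom : α → PForm α
  | fls  : PForm α
  | not  : PForm α → PForm α
  | and  : PForm α → PForm α → PForm α
  | or   : PForm α → PForm α → PForm α
  | imp  : PForm α → PForm α → PForm α

def PForm.Sat {α : Type} (v : α → Prop) : PForm α → Prop
  | atom p => v p
  | fls => False
  | not φ => ¬ Sat v φ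
  | and φ ψ => Sat v φ ∧ Sat v ψ
  | or φ ψ => Sat v φ ∨ Sat v ψ
  | imp φ ψ => Sat v φ → Sat v ψ

/-- Classical (propositional) global consequence. -/
def EntailsCl {α : Type} (Γ : Set (PForm α)) (φ : PForm α) : Prop :=
  ∀ v : α → Prop, (∀ ψ ∈ Γ, PForm.Sat v ψ) → PForm.Sat v φ

/-- Multimodal formulas with one box per action. -/
inductive MForm (Act α : Type) : Type
  | atom : α → MForm Act α
  | fls  : MForm Act α
  | not  : MForm Act α → MForm Act α
  | and  : MForm Act α → MForm Act α → MForm Act α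
  | or   : MForm Act α → MForm Act α → MForm Act α
  | imp  : MForm Act α → MForm Act α → MForm Act α
  | box  : Act → MForm Act α → MForm Act α

def PForm.toM {Act α : Type} : PForm α → MForm Act α
  | .atom p => .atom p
  | .fls => .fls
  | .not φ => .not φ.toM
  | .and φ ψ => .and φ.toM ψ.toM
  | .or φ ψ => .or φ.toM ψ.toM
  | .imp φ ψ => .imp φ.toM ψ.toM

/-- A Kripke model for multimodal K. -/
structure KModel (Act α : Type) where
  W : Type
  R : Act → W → W → Prop
  V : W → α → Prop

def MForm.Sat {Act α : Type} (M : KModel Act α) : M.W → MForm Act α → Prop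
  | w, atom p => M.V w p
  | _, fls => False
  | w, not φ => ¬ Sat M w φ
  | w, and φ ψ => Sat M w φ ∧ Sat M w ψ
  | w, or φ ψ => Sat M w φ ∨ Sat M w ψ
  | w, imp φ ψ => Sat M w φ → Sat M w ψ
  | w, box a φ => ∀ w', M.R a w w' → Sat M w' φ

/-- Global truth in a model. -/
def Glob {Act α : Type} (M : KModel Act α) (Φ : MForm Act α) : Prop :=
  ∀ w : M.W, MForm.Sat M w Φ

/-- Global consequence in multimodal K. -/
def ConsK {Act α : Type} (Γ : Set (MForm Act α)) (Φ : MForm Act α) : Prop :=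
  ∀ M : KModel Act α, (∀ Ψ ∈ Γ, Glob M Ψ) → Glob M Φ

/-- Literals. -/
abbrev Lit (α : Type) := α × Bool

def Lit.Sat {α : Type} (v : α → Prop) (l : Lit α) : Prop :=
  if l.2 then v l.1 else ¬ v l.1

/-- A dependence relation `⇝ ⊆ Act × Lit`. -/
abbrev Dep (Act α : Type) := Act → Lit α → Prop

/-- `⇝`-models: along `R a`, literals independent of `a` persist. -/
def IsDepModel {Act α : Type} (dep : Dep Act α) (M : KModel Act α) : Prop :=
  ∀ (a : Act) (w w' : M.W), M.R a w w' → ∀ p : α,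
    (¬ dep a (p, true) → ¬ M.V w p → ¬ M.V w' p) ∧
    (¬ dep a (p, false) → M.V w p → M.V w' p)

/-- Dependence-based global consequence. -/
def ConsDep {Act α : Type} (dep : Dep Act α) (Γ : Set (MForm Act α)) (Φ : MForm Act α) : Prop :=
  ∀ M : KModel Act α, IsDepModel dep M → (∀ Ψ ∈ Γ, Glob M Ψ) → Glob M Φ

/-- An action theory: static laws `S`, effect laws `E` (antecedent/consequent
pairs), executability laws `X` (antecedents), inexecutability laws `I`
(antecedents). -/
structure ActionTheory (Act α : Type) where
  S : Set (PForm α)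
  E : Act → Set (PForm α × PForm α)
  X : Act → Set (PForm α)
  I : Act → Set (PForm α)

/-- `⟨a⟩Φ`. -/
def MForm.diam {Act α : Type} (a : Act) (Φ : MForm Act α) : MForm Act α :=
  .not (.box a (.not Φ))

/-- Effect law `A → [a]C`. -/
def effLaw {Act α : Type} (a : Act) (e : PForm α × PForm α) : MForm Act α :=
  .imp e.1.toM (.box a e.2.toM)

/-- Executability law `A → ⟨a⟩⊤`. -/
def exeLaw {Act α : Type} (a : Act) (A : PForm α) : MForm Act α :=
  .imp A.toM (MForm.diam a (.not .fls))

/-- Inexecutability law `A → [a]⊥`. -/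
def inexLaw {Act α : Type} (a : Act) (A : PForm α) : MForm Act α :=
  .imp A.toM (.box a .fls)

variable {Act α : Type}

def staticForms (T : ActionTheory Act α) : Set (MForm Act α) := PForm.toM '' T.S
def effForms (T : ActionTheory Act α) (a : Act) : Set (MForm Act α) := effLaw a '' T.E a
def exeForms (T : ActionTheory Act α) (a : Act) : Set (MForm Act α) := exeLaw a '' T.X a
def inexForms (T : ActionTheory Act α) (a : Act) : Set (MForm Act α) := inexLaw a '' T.I a

/-- The action theory of the single action `a`:  `S ∪ E_a ∪ X_a ∪ I_a`. -/
def formsFor (T : ActionTheory Act α) (a : Act) : Set (MForm Act α) :=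
  staticForms T ∪ effForms T a ∪ exeForms T a ∪ inexForms T a

/-- The whole action theory:  `S ∪ E ∪ X ∪ I`. -/
def allForms (T : ActionTheory Act α) : Set (MForm Act α) :=
  staticForms T ∪ (⋃ a, effForms T a) ∪ (⋃ a, exeForms T a) ∪ (⋃ a, inexForms T a)

/-- Postulate PS for action `a`: no implicit static laws. -/
def PS (T : ActionTheory Act α) (dep : Dep Act α) (a : Act) : Prop :=
  ∀ φ : PForm α, ConsDep dep (formsFor T a) φ.toM → EntailsCl T.S φ

/-- Postulate PS*: no implicit static laws for the whole theory. -/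
def PSstar (T : ActionTheory Act α) (dep : Dep Act α) : Prop :=
  ∀ φ : PForm α, ConsDep dep (allForms T) φ.toM → EntailsCl T.S φ

/-- Postulate PI for action `a`: no implicit inexecutability laws. -/
def PIpost (T : ActionTheory Act α) (dep : Dep Act α) (a : Act) : Prop :=
  ∀ A : PForm α, ConsDep dep (formsFor T a) (inexLaw a A) →
    ConsK (staticForms T ∪ inexForms T a) (inexLaw a A)

/-- Postulate PI*: no implicit inexecutability laws for the whole theory. -/
def PIstar (T : ActionTheory Act α) (dep : Dep Act α) : Prop :=
  ∀ (a : Act) (A : PForm α), ConsDep dep (allForms T) (inexLaw a A) →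
    ConsK (staticForms T ∪ ⋃ a', inexForms T a') (inexLaw a A)

/-!
Passing from the whole theory to the laws of one action `a` only
forgets laws, so PI* gives PI for `a` after cutting a model of `S ∪ I_a` down
to its `a`-transitions. Conversely, let `M` be a `⇝`-model of `S ∪ E_a ∪ X_a ∪ I_a`.
Every world of `M` satisfies `S`, so by PS* (and finiteness of the atoms, which
lets a formula pin down a valuation) its valuation is realised in a `⇝`-model of
the whole theory. Grafting these models onto `M` for all actions other than `a`
yields a `⇝`-model of the whole theory in which the worlds of `M` keep their
`a`-successors, so inexecutability of `a` transfers back to `M`.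
-/

theorem PForm.sat_toM (M : KModel Act α) (w : M.W) (φ : PForm α) :
    MForm.Sat M w φ.toM ↔ φ.Sat (M.V w) := by
  induction φ <;> simp [PForm.toM, MForm.Sat, PForm.Sat, *]

theorem ConsDep.mono {dep : Dep Act α} {Γ Δ : Set (MForm Act α)} {Φ : MForm Act α}
    (h : ConsDep dep Γ Φ) (hΓΔ : Γ ⊆ Δ) : ConsDep dep Δ Φ :=
  fun M hM hΔ => h M hM fun Ψ hΨ => hΔ Ψ (hΓΔ hΨ)

theorem ConsK.mono {Γ Δ : Set (MForm Act α)} {Φ : MForm Act α}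
    (h : ConsK Γ Φ) (hΓΔ : Γ ⊆ Δ) : ConsK Δ Φ :=
  fun M hΔ => h M fun Ψ hΨ => hΔ Ψ (hΓΔ hΨ)

theorem formsFor_subset_allForms (T : ActionTheory Act α) (a : Act) :
    formsFor T a ⊆ allForms T := by
  unfold formsFor allForms
  gcongr <;> exact Set.subset_iUnion (fun b => _) a

def Dep.Permits (dep : Dep Act α) (b : Act) (v v' : α → Prop) : Prop :=
  ∀ p : α, (¬ dep b (p, true) → ¬ v p → ¬ v' p) ∧ (¬ dep b (p, false) → v p → v' p)

namespace KModel

/-- The valuations of the `b`-successors of `w`; the action laws only see these. -/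
def succVals (M : KModel Act α) (b : Act) (w : M.W) : Set (α → Prop) :=
  M.V '' {w' | M.R b w w'}

theorem sat_effLaw (M : KModel Act α) (w : M.W) (b : Act) (e : PForm α × PForm α) :
    MForm.Sat M w (effLaw b e) ↔ (e.1.Sat (M.V w) → ∀ v ∈ M.succVals b w, e.2.Sat v) := by
  simp [effLaw, succVals, MForm.Sat, PForm.sat_toM]

theorem sat_exeLaw (M : KModel Act α) (w : M.W) (b : Act) (B : PForm α) :
    MForm.Sat M w (exeLaw b B) ↔ (B.Sat (M.V w) → (M.succVals b w).Nonempty) := by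
  simp [exeLaw, MForm.diam, succVals, MForm.Sat, PForm.sat_toM, Set.Nonempty]

theorem sat_inexLaw (M : KModel Act α) (w : M.W) (b : Act) (B : PForm α) :
    MForm.Sat M w (inexLaw b B) ↔ (B.Sat (M.V w) → M.succVals b w = ∅) := by
  simp [inexLaw, succVals, MForm.Sat, PForm.sat_toM, Set.eq_empty_iff_forall_notMem]

theorem isDepModel_iff (dep : Dep Act α) (M : KModel Act α) :
    IsDepModel dep M ↔ ∀ b w, ∀ v ∈ M.succVals b w, dep.Permits b (M.V w) v := by
  simp only [IsDepModel, Dep.Permits, succVals, Set.forall_mem_image, Set.mem_ofPred_eq]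

def restrict (M : KModel Act α) (a : Act) : KModel Act α :=
  ⟨M.W, fun b w w' => b = a ∧ M.R a w w', M.V⟩

theorem succVals_restrict_self (M : KModel Act α) (a : Act) (w : M.W) :
    (M.restrict a).succVals a w = M.succVals a w := by
  simp [succVals, restrict]

theorem succVals_restrict_of_ne (M : KModel Act α) {a b : Act} (hb : b ≠ a) (w : M.W) :
    (M.restrict a).succVals b w = ∅ := by
  simp [succVals, restrict, hb]

section Glue

variable (M : KModel Act α) (a : Act) (N : M.W → KModel Act α) (d : ∀ w, (N w).W)

def glue : KModel Act α where
  W := M.W ⊕ Σ w, (N w).W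
  R b
    | .inl w, .inl w' => b = a ∧ M.R a w w'
    | .inl w, .inr y => b ≠ a ∧ ∃ u, y = ⟨w, u⟩ ∧ (N w).R b (d w) u
    | .inr x, .inr y => ∃ u, y = ⟨x.1, u⟩ ∧ (N x.1).R b x.2 u
    | .inr _, .inl _ => False
  V
    | .inl w => M.V w
    | .inr x => (N x.1).V x.2

theorem glue_V_inl (w : M.W) : (M.glue a N d).V (.inl w) = M.V w := rfl

theorem succVals_glue_inl_self (w : M.W) :
    (M.glue a N d).succVals a (.inl w) = M.succVals a w := by
  ext v
  simp [succVals, glue]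

theorem succVals_glue_inl_of_ne {b : Act} (hb : b ≠ a) (w : M.W) :
    (M.glue a N d).succVals b (.inl w) = (N w).succVals b (d w) := by
  ext v
  simp only [succVals, glue, Set.mem_image, Set.mem_ofPred_eq, Sum.exists, hb]
  aesop

theorem succVals_glue_inr (b : Act) (x : Σ w, (N w).W) :
    (M.glue a N d).succVals b (.inr x) = (N x.1).succVals b x.2 := by
  ext v
  simp only [succVals, glue, Set.mem_image, Set.mem_ofPred_eq, Sum.exists]
  aesop

theorem forall_succVals_glue {P : Act → (α → Prop) → Set (α → Prop) → Prop}
    (hM : ∀ w, P a (M.V w) (M.succVals a w))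
    (hN : ∀ w x b, P b ((N w).V x) ((N w).succVals b x)) (hd : ∀ w, (N w).V (d w) = M.V w) :
    ∀ z b, P b ((M.glue a N d).V z) ((M.glue a N d).succVals b z) := by
  rintro (w | x) b
  · by_cases hb : b = a
    · subst hb
      rw [succVals_glue_inl_self]
      exact hM w
    · rw [succVals_glue_inl_of_ne M a N d hb, glue_V_inl, ← hd w]
      exact hN w (d w) b
  · rw [succVals_glue_inr]
    exact hN x.1 x.2 b

theorem isDepModel_glue {dep : Dep Act α} (hM : IsDepModel dep M)
    (hN : ∀ w, IsDepModel dep (N w)) (hd : ∀ w, (N w).V (d w) = M.V w) :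
    IsDepModel dep (M.glue a N d) := by
  simp only [isDepModel_iff] at hM hN ⊢
  exact fun b z => forall_succVals_glue M a N d (P := fun b v s => ∀ v' ∈ s, dep.Permits b v v')
    (hM a) (fun w x b => hN w b x) hd z b

end Glue

end KModel

namespace ActionTheory

def ActionLawsHold (T : ActionTheory Act α) (b : Act) (v : α → Prop) (s : Set (α → Prop)) :
    Prop :=
  (∀ e ∈ T.E b, e.1.Sat v → ∀ v' ∈ s, e.2.Sat v') ∧
  (∀ B ∈ T.X b, B.Sat v → s.Nonempty) ∧
  (∀ B ∈ T.I b, B.Sat v → s = ∅)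

theorem forall_glob_allForms_iff (T : ActionTheory Act α) (M : KModel Act α) :
    (∀ Ψ ∈ allForms T, Glob M Ψ) ↔
      ∀ w, (∀ φ ∈ T.S, φ.Sat (M.V w)) ∧ ∀ b, T.ActionLawsHold b (M.V w) (M.succVals b w) := by
  simp only [allForms, staticForms, effForms, exeForms, inexForms, ActionLawsHold, Glob,
    Set.mem_union, Set.mem_iUnion, Set.mem_image, or_imp, forall_and, forall_exists_index,
    and_imp, forall_comm (α := MForm Act α) (β := Act), forall_apply_eq_imp_iff₂,
    PForm.sat_toM, KModel.sat_effLaw, KModel.sat_exeLaw, KModel.sat_inexLaw]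
  grind

theorem forall_glob_formsFor_iff (T : ActionTheory Act α) (a : Act) (M : KModel Act α) :
    (∀ Ψ ∈ formsFor T a, Glob M Ψ) ↔
      ∀ w, (∀ φ ∈ T.S, φ.Sat (M.V w)) ∧ T.ActionLawsHold a (M.V w) (M.succVals a w) := by
  simp only [formsFor, staticForms, effForms, exeForms, inexForms, ActionLawsHold, Glob,
    Set.mem_union, or_imp, forall_and, Set.forall_mem_image, PForm.sat_toM,
    KModel.sat_effLaw, KModel.sat_exeLaw, KModel.sat_inexLaw]
  grind

theorem forall_glob_allForms_glue (T : ActionTheory Act α) (M : KModel Act α)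
    (a : Act) (N : M.W → KModel Act α) (d : ∀ w, (N w).W)
    (hM : ∀ Ψ ∈ formsFor T a, Glob M Ψ) (hN : ∀ w, ∀ Ψ ∈ allForms T, Glob (N w) Ψ)
    (hd : ∀ w, (N w).V (d w) = M.V w) :
    ∀ Ψ ∈ allForms T, Glob (M.glue a N d) Ψ := by
  rw [forall_glob_formsFor_iff] at hM
  simp only [forall_glob_allForms_iff] at hN ⊢
  have hlaws := M.forall_succVals_glue a N d (P := T.ActionLawsHold)
    (fun w => (hM w).2) (fun w x => (hN w x).2) hd
  rintro (w | x)
  · exact ⟨(hM w).1, hlaws _⟩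
  · exact ⟨(hN x.1 x.2).1, hlaws _⟩

end ActionTheory

namespace PForm

def conj : List (PForm α) → PForm α
  | [] => .not .fls
  | φ :: l => .and φ (conj l)

theorem sat_conj (v : α → Prop) (l : List (PForm α)) :
    (conj l).Sat v ↔ ∀ φ ∈ l, φ.Sat v := by
  induction l <;> simp [conj, PForm.Sat, *]

noncomputable def charFormula [Fintype α] (v : α → Prop) : PForm α :=
  open Classical in
  conj (Finset.univ.toList.map fun p => if v p then .atom p else .not (.atom p))

theorem sat_charFormula [Fintype α] (v u : α → Prop) : (charFormula v).Sat u ↔ u = v := by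
  simp only [charFormula, sat_conj, List.mem_map, Finset.mem_toList, Finset.mem_univ, true_and,
    forall_exists_index, forall_apply_eq_imp_iff, funext_iff]
  refine forall_congr' fun p => ?_
  by_cases h : v p <;> simp [h, PForm.Sat]

end PForm

theorem PSstar.exists_model [Fintype α] {T : ActionTheory Act α} {dep : Dep Act α}
    (hPS : PSstar T dep) {v : α → Prop} (hv : ∀ φ ∈ T.S, φ.Sat v) :
    ∃ (N : KModel Act α) (u : N.W),
      IsDepModel dep N ∧ (∀ Ψ ∈ allForms T, Glob N Ψ) ∧ N.V u = v := by
  by_contra! h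
  have hcons : ConsDep dep (allForms T) (PForm.not (PForm.charFormula v)).toM :=
    fun N hN hNT u => by
      simpa [PForm.sat_toM, PForm.Sat, PForm.sat_charFormula] using h N u hN hNT
  exact hPS _ hcons v hv ((PForm.sat_charFormula v v).2 rfl)

theorem consK_inexLaw_of_consK_iUnion_inexForms {T : ActionTheory Act α} {a : Act}
    {A : PForm α} (h : ConsK (staticForms T ∪ ⋃ b, inexForms T b) (inexLaw a A)) :
    ConsK (staticForms T ∪ inexForms T a) (inexLaw a A) := by
  intro M hM w
  have hMa : ∀ Ψ ∈ staticForms T ∪ ⋃ b, inexForms T b, Glob (M.restrict a) Ψ := by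
    rintro _ (⟨φ, hφ, rfl⟩ | ⟨_, ⟨b, rfl⟩, B, hB, rfl⟩) w'
    · exact (PForm.sat_toM _ w' φ).2 ((PForm.sat_toM M w' φ).1 (hM _ (.inl ⟨φ, hφ, rfl⟩) w'))
    · rw [KModel.sat_inexLaw]
      by_cases hb : b = a
      · subst hb
        exact fun hBw => (M.succVals_restrict_self b w').trans
          ((KModel.sat_inexLaw M w' b B).1 (hM _ (.inr ⟨B, hB, rfl⟩) w') hBw)
      · exact fun _ => KModel.succVals_restrict_of_ne M hb w'
  rw [KModel.sat_inexLaw, ← M.succVals_restrict_self a w]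
  exact (KModel.sat_inexLaw (M.restrict a) w a A).1 (h _ hMa w)

theorem PSstar.consDep_formsFor_of_consDep_allForms [Fintype α] {T : ActionTheory Act α}
    {dep : Dep Act α} (hPS : PSstar T dep) {a : Act} {A : PForm α}
    (h : ConsDep dep (allForms T) (inexLaw a A)) :
    ConsDep dep (formsFor T a) (inexLaw a A) := by
  intro M hM hMT w
  choose N d hN hNT hd using
    fun w => hPS.exists_model ((T.forall_glob_formsFor_iff a M).1 hMT w).1
  rw [KModel.sat_inexLaw, ← M.succVals_glue_inl_self a N d w]
  exact (KModel.sat_inexLaw (M.glue a N d) (.inl w) a A).1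
    (h _ (M.isDepModel_glue a N d hM hN hd) (T.forall_glob_allForms_glue M a N d hMT hNT hd) _)

theorem stmt_10_general [Fintype α] (T : ActionTheory Act α) (dep : Dep Act α)
    (hPS : PSstar T dep) :
    PIstar T dep ↔ ∀ a : Act, PIpost T dep a := by
  constructor
  · intro hPI a A hA
    exact consK_inexLaw_of_consK_iUnion_inexForms
      (hPI a A (hA.mono (formsFor_subset_allForms T a)))
  · intro hPI a A hA
    exact (hPI a A (hPS.consDep_formsFor_of_consDep_allForms hA)).mono
      (Set.union_subset_union_right _ (Set.subset_iUnion (fun b => inexForms T b) a))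

/-- under PS*, PI* holds iff PI holds for every action. -/
theorem stmt_10 [Fintype Act] [Fintype α] (T : ActionTheory Act α) (dep : Dep Act α)
    (hPS : PSstar T dep) :
    PIstar T dep ↔ ∀ a : Act, PIpost T dep a :=
  stmt_10_general T dep hPS
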